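/- arXiv:0805.2014 — 2 statements merged into one kernel-verified Lean document; each statement's English description precedes it below -/
import Mathlib

section
/- Let ω = (−1 + i√3)/2 and let Q be an n×n nontrivial cube root Seidel matrix in standard form satisfying Q² = (n−1)·I + μ·Q for a real number μ. Then μ is an integer m, and exactly one of the following three cases holds: n ≡ 0 (mod 9) and m ≡ 7 (mod 9); or n ≡ 3 (mod 9) and m ≡ 1 (mod 9); or n ≡ 6 (mod 9) and m ≡ 4 (mod 9). -/
/-- `ω = (−1 + i√3)/2`, a primitive cube root of unity. -/
noncomputable def ω3 : ℂ := (-1 + Complex.I * Real.sqrt 3) / 2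

/-- A cube root Seidel matrix: self-adjoint, zero diagonal, off-diagonal
entries among the cube roots of unity. -/
def IsCubeRootSeidel {n : ℕ} (Q : Matrix (Fin n) (Fin n) ℂ) : Prop :=
  Q.IsHermitian ∧ (∀ i, Q i i = 0) ∧
    ∀ i j, i ≠ j → Q i j = 1 ∨ Q i j = ω3 ∨ Q i j = ω3 ^ 2

/-- Standard form: every off-diagonal entry in the first row and first column
equals 1. -/
def IsStandardForm {n : ℕ} (Q : Matrix (Fin n) (Fin n) ℂ) : Prop :=
  ∀ i j : Fin n, i ≠ j → (i.val = 0 ∨ j.val = 0) → Q i j = 1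

/-- Nontrivial: some off-diagonal entry is not equal to 1. -/
def IsNontrivial {n : ℕ} (Q : Matrix (Fin n) (Fin n) ℂ) : Prop :=
  ∃ i j : Fin n, i ≠ j ∧ Q i j ≠ 1

/-!
Write `Q = S + (ω - 1) T` with integer matrices `S`, `T`, using the `ℤ`-basis `1, ω - 1` of `ℤ[ω]`.
As `1, ω - 1` are linearly independent over `ℝ`, the entry `(0, j)` of `Q² = (n - 1) I + μ Q`
with `Q₀ⱼ = 1` forces `μ = m ∈ ℤ`, and the relation splits into two integer matrix identities.
Since `(ω - 1)² = -3ω`, modulo 3 they read `(J - I)² = (n - 1) I + m (J - I)` and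
`(J - I) T + T (J - I) = m T`, with `J` the all-ones matrix and `T mod 3` the exponents of the
entries. The first gives `n ≡ m + 2 (mod 3)`. In the second, the zero first row and column of `T`
force `J T = T J = 0`, leaving `(m + 2) T = 0`, so `m ≡ -2 (mod 3)` by nontriviality.
Finally `Q` is traceless Hermitian with eigenvalues among the roots `(m ± √D) / 2` of
`x² - m x - (n - 1)`; the trace condition with `m ≠ 0` makes `√D` rational, so
`D = m² + 4(n - 1) = (m + 2)² + 4(n - 2 - m)` is a perfect square, and mod 9 this gives
`n ≡ m + 2 (mod 9)`.
-/

open Matrix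

lemma ω3_sq : ω3 ^ 2 = -1 - ω3 := by
  have h3 : ((√3 : ℝ) : ℂ) ^ 2 = 3 := by norm_cast; simp
  rw [ω3]
  linear_combination (((√3 : ℝ) : ℂ) ^ 2 / 4) * Complex.I_sq - (1 / 4 : ℂ) * h3

lemma ω3_im : ω3.im = √3 / 2 := by simp [ω3]

lemma ω3_sq_im : (ω3 ^ 2).im = -(√3 / 2) := by simp [ω3_sq, ω3_im]

lemma ω3_ne_zero : ω3 ≠ 0 := fun h => by simpa [ω3_im] using congrArg Complex.im h
lemma ω3_ne_one : ω3 ≠ 1 := fun h => by simpa [ω3_im] using congrArg Complex.im h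
lemma ω3_sq_ne_zero : ω3 ^ 2 ≠ 0 := fun h => by simpa [ω3_sq_im] using congrArg Complex.im h
lemma ω3_sq_ne_one : ω3 ^ 2 ≠ 1 := fun h => by simpa [ω3_sq_im] using congrArg Complex.im h
lemma ω3_sq_ne_ω3 : ω3 ^ 2 ≠ ω3 := fun h => by
  have := congrArg Complex.im h
  rw [ω3_sq_im, ω3_im] at this
  linarith [Real.sqrt_pos.2 (by norm_num : (0:ℝ) < 3)]

lemma ofReal_add_mul_ω3_sub_one_inj {a b c d : ℝ}
    (h : (a : ℂ) + b * (ω3 - 1) = c + d * (ω3 - 1)) : a = c ∧ b = d := by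
  have him := congrArg Complex.im h
  simp only [Complex.add_im, Complex.mul_im, Complex.ofReal_re, Complex.ofReal_im, Complex.sub_im,
    Complex.sub_re, Complex.one_im, ω3_im, zero_mul, add_zero, zero_add, sub_zero] at him
  obtain rfl : b = d := mul_right_cancel₀ (by positivity) him
  exact ⟨by exact_mod_cast (by linear_combination h : (a : ℂ) = c), rfl⟩

-- Coordinates of `0, 1, ω, ω²` in the basis `1, ω - 1`; mod 3 the first is `1` on every cube
-- root of unity and the second is its exponent.
noncomputable def coordOne (z : ℂ) : ℤ := if z = 0 then 0 else if z = ω3 ^ 2 then -2 else 1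

noncomputable def coordOmegaSubOne (z : ℂ) : ℤ := if z = ω3 then 1 else if z = ω3 ^ 2 then -1 else 0

lemma coordOne_add_coordOmegaSubOne {z : ℂ} (hz : z = 0 ∨ z = 1 ∨ z = ω3 ∨ z = ω3 ^ 2) :
    (coordOne z : ℂ) + coordOmegaSubOne z * (ω3 - 1) = z := by
  rcases hz with rfl | rfl | rfl | rfl
  · simp [coordOne, coordOmegaSubOne, ω3_ne_zero.symm, ω3_sq_ne_zero.symm]
  · simp [coordOne, coordOmegaSubOne, ω3_ne_one.symm, ω3_sq_ne_one.symm]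
  · simp [coordOne, coordOmegaSubOne, ω3_ne_zero, ω3_sq_ne_ω3.symm]
  · rw [coordOne, if_neg ω3_sq_ne_zero, if_pos rfl, coordOmegaSubOne, if_neg ω3_sq_ne_ω3,
      if_pos rfl]
    push_cast
    linear_combination -ω3_sq

lemma coordOne_cast {z : ℂ} (hz : z = 1 ∨ z = ω3 ∨ z = ω3 ^ 2) : (coordOne z : ZMod 3) = 1 := by
  rcases hz with rfl | rfl | rfl
  · simp [coordOne, ω3_sq_ne_one.symm]
  · simp [coordOne, ω3_ne_zero, ω3_sq_ne_ω3.symm]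
  · rw [coordOne, if_neg ω3_sq_ne_zero, if_pos rfl]
    decide

lemma coordOmegaSubOne_cast_ne_zero {z : ℂ} (hz : z = ω3 ∨ z = ω3 ^ 2) :
    (coordOmegaSubOne z : ZMod 3) ≠ 0 := by
  rcases hz with rfl | rfl <;> simp [coordOmegaSubOne, ω3_sq_ne_ω3]

lemma coordOmegaSubOne_eq_zero {z : ℂ} (hz : z = 0 ∨ z = 1) : coordOmegaSubOne z = 0 := by
  rcases hz with rfl | rfl <;>
    simp [coordOmegaSubOne, ω3_ne_zero.symm, ω3_sq_ne_zero.symm, ω3_ne_one.symm, ω3_sq_ne_one.symm]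

section CoordinateMatrices

variable {ι : Type*} [Fintype ι] [DecidableEq ι]

lemma mapMatrix_add_smul_sq (S T : Matrix ι ι ℤ) :
    ((Int.castRingHom ℂ).mapMatrix S + (ω3 - 1) • (Int.castRingHom ℂ).mapMatrix T) ^ 2 =
      (Int.castRingHom ℂ).mapMatrix (S * S - 3 • (T * T)) +
        (ω3 - 1) • (Int.castRingHom ℂ).mapMatrix (S * T + T * S - 3 • (T * T)) := by
  simp only [map_sub, map_add, map_mul, map_nsmul]
  set S' := (Int.castRingHom ℂ).mapMatrix S
  set T' := (Int.castRingHom ℂ).mapMatrix T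
  simp only [sq, add_mul, mul_add, smul_mul_assoc, mul_smul_comm]
  linear_combination (norm := module) ω3_sq • (T' * T')

lemma mapMatrix_add_smul_inj {A B C D : Matrix ι ι ℤ}
    (h : (Int.castRingHom ℂ).mapMatrix A + (ω3 - 1) • (Int.castRingHom ℂ).mapMatrix B =
      (Int.castRingHom ℂ).mapMatrix C + (ω3 - 1) • (Int.castRingHom ℂ).mapMatrix D) :
    A = C ∧ B = D := by
  have hij (i j : ι) : A i j = C i j ∧ B i j = D i j := by
    have := ofReal_add_mul_ω3_sub_one_inj (a := A i j) (b := B i j) (c := C i j) (d := D i j)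
      (by simpa [mul_comm] using congrFun (congrFun h i) j)
    exact_mod_cast this
  exact ⟨Matrix.ext fun i j => (hij i j).1, Matrix.ext fun i j => (hij i j).2⟩

variable {Q : Matrix ι ι ℂ} {S T : Matrix ι ι ℤ}
  (hQ : Q = (Int.castRingHom ℂ).mapMatrix S + (ω3 - 1) • (Int.castRingHom ℂ).mapMatrix T)
include hQ

lemma exists_eq_intCast_of_sq_eq {c : ℂ} {μ : ℝ} (h : Q ^ 2 = c • 1 + (μ : ℂ) • Q) {i j : ι}
    (hij : i ≠ j) (hQij : Q i j = 1) : ∃ m : ℤ, μ = m := by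
  rw [hQ, mapMatrix_add_smul_sq, ← hQ] at h
  set a := (S * S - 3 • (T * T)) i j
  set b := (S * T + T * S - 3 • (T * T)) i j
  have hentry : ((a : ℝ) : ℂ) + (b : ℝ) * (ω3 - 1) = μ + (0 : ℝ) * (ω3 - 1) := by
    have := congrFun (congrFun h i) j
    simp only [Matrix.add_apply, Matrix.smul_apply, RingHom.mapMatrix_apply, map_apply,
      one_apply_ne hij, hQij, smul_eq_mul, mul_zero, mul_one, zero_add, eq_intCast] at this
    push_cast
    linear_combination this
  exact ⟨a, (ofReal_add_mul_ω3_sub_one_inj hentry).1.symm⟩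

lemma coord_sq_eq_of_sq_eq {c m : ℤ} (h : Q ^ 2 = (c : ℂ) • 1 + (m : ℂ) • Q) :
    S * S - 3 • (T * T) = c • 1 + m • S ∧ S * T + T * S - 3 • (T * T) = m • T := by
  refine mapMatrix_add_smul_inj ?_
  rw [← mapMatrix_add_smul_sq, ← hQ, h, hQ]
  simp only [map_add, map_zsmul, map_one]
  module

end CoordinateMatrices

def allOnes (ι R : Type*) [One R] : Matrix ι ι R := of fun _ _ => 1

@[simp]
lemma allOnes_apply {ι R : Type*} [One R] (i j : ι) : allOnes ι R i j = 1 := rfl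

section AllOnes

variable {ι R : Type*} [Fintype ι] [DecidableEq ι] [CommRing R]

lemma allOnes_sub_one_mul_self_apply_of_ne {i j : ι} (hij : i ≠ j) :
    ((allOnes ι R - 1) * (allOnes ι R - 1)) i j = Fintype.card ι - 2 := by
  simp only [Matrix.mul_apply, Matrix.sub_apply, allOnes_apply, Matrix.one_apply, mul_sub, mul_one,
    mul_ite, mul_zero, Finset.sum_sub_distrib, Finset.sum_const, Finset.card_univ, nsmul_eq_mul,
    Finset.sum_ite_eq, Finset.mem_univ, ↓reduceIte, Finset.sum_ite_eq', hij, sub_zero]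
  ring

lemma smul_eq_zero_of_allOnes_sub_one_mul_add {A : Matrix ι ι R} {d : R} (z : ι)
    (hrow : ∀ k, A z k = 0) (hcol : ∀ k, A k z = 0)
    (h : (allOnes ι R - 1) * A + A * (allOnes ι R - 1) = d • A) : (d + 2) • A = 0 := by
  have hij (i j : ι) : ∑ k, A k j + ∑ k, A i k = (d + 2) * A i j := by
    have := congrFun (congrFun h i) j
    simp only [sub_mul, one_mul, mul_sub, mul_one, Matrix.add_apply, Matrix.sub_apply,
      Matrix.mul_apply, allOnes_apply, Matrix.smul_apply, smul_eq_mul] at this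
    linear_combination this
  have hcolsum (j : ι) : ∑ k, A k j = 0 := by simpa [hrow] using hij z j
  have hrowsum (i : ι) : ∑ k, A i k = 0 := by simpa [hcol] using hij i z
  ext i j
  simpa [hcolsum, hrowsum] using (hij i j).symm

end AllOnes

lemma isSquare_of_mul_sq_eq_sq {D k a : ℤ} (hk : k ≠ 0) (h : D * k ^ 2 = a ^ 2) : IsSquare D := by
  rw [← Rat.isSquare_intCast_iff]
  refine ⟨a / k, ?_⟩
  have hk' : (k : ℚ) ≠ 0 := by exact_mod_cast hk
  field_simp
  exact_mod_cast h

lemma isSquare_discrim_of_sum_eq_zero {ι : Type*} [Fintype ι] [Nonempty ι] {x : ι → ℝ}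
    {c m : ℤ} (hm : m ≠ 0) (hx : ∀ i, x i ^ 2 = c + m * x i) (hsum : ∑ i, x i = 0) :
    IsSquare (m ^ 2 + 4 * c) := by
  have hy (i : ι) : (2 * x i - m) ^ 2 = ((m ^ 2 + 4 * c : ℤ) : ℝ) := by
    push_cast; linear_combination 4 * hx i
  set s := √((m ^ 2 + 4 * c : ℤ) : ℝ)
  have hs : s ^ 2 = ((m ^ 2 + 4 * c : ℤ) : ℝ) := by
    rw [Real.sq_sqrt (hy (Classical.arbitrary ι) ▸ sq_nonneg _)]
  obtain ⟨k, hk⟩ : ∃ k : ℤ, ∑ i, (2 * x i - m) = k * s := by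
    refine Finset.sum_induction _ (fun r => ∃ k : ℤ, r = k * s)
      (fun _ _ ⟨k, hk⟩ ⟨l, hl⟩ => ⟨k + l, by rw [hk, hl]; push_cast; ring⟩) ⟨0, by simp⟩
      fun i _ => ?_
    rcases sq_eq_sq_iff_eq_or_eq_neg.1 ((hy i).trans hs.symm) with h | h
    · exact ⟨1, by simp [h]⟩
    · exact ⟨-1, by simp [h]⟩
  have hsum' : ∑ i, (2 * x i - m) = -(Fintype.card ι * m : ℤ) := by
    simp [Finset.sum_sub_distrib, ← Finset.mul_sum, hsum]
  have hk0 : k ≠ 0 := by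
    rintro rfl
    simp [hsum', hm] at hk
  refine isSquare_of_mul_sq_eq_sq hk0 (a := Fintype.card ι * m) ?_
  have : ((m ^ 2 + 4 * c : ℤ) : ℝ) * k ^ 2 = ((Fintype.card ι * m : ℤ) : ℝ) ^ 2 := by
    rw [← hs, ← neg_sq (((Fintype.card ι * m : ℤ) : ℝ)), ← hsum', hk]; ring
  exact_mod_cast this

lemma Matrix.IsHermitian.eigenvalues_sq_eq {𝕜 ι : Type*} [RCLike 𝕜] [Fintype ι] [DecidableEq ι]
    {A : Matrix ι ι 𝕜} (hA : A.IsHermitian) {c m : ℝ} (h : A ^ 2 = (c : 𝕜) • 1 + (m : 𝕜) • A)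
    (i : ι) : hA.eigenvalues i ^ 2 = c + m * hA.eigenvalues i := by
  set v := ⇑(hA.eigenvectorBasis i)
  have hv : A *ᵥ v = (hA.eigenvalues i : 𝕜) • v := by
    rw [hA.mulVec_eigenvectorBasis i, RCLike.real_smul_eq_coe_smul (K := 𝕜)]
  have hv0 : v ≠ 0 := (WithLp.ofLp_eq_zero 2).ne.2 (hA.eigenvectorBasis.orthonormal.ne_zero i)
  have key : ((hA.eigenvalues i : 𝕜) ^ 2 - (c + m * hA.eigenvalues i)) • v = 0 := by
    have h2 := congrArg (· *ᵥ v) h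
    simp only [sq, ← mulVec_mulVec, hv, mulVec_smul, add_mulVec, smul_mulVec, one_mulVec] at h2
    rw [sub_smul, sq, mul_smul, h2, add_smul, mul_smul]
    simp
  have := (smul_eq_zero.1 key).resolve_right hv0
  exact_mod_cast sub_eq_zero.1 this

lemma Matrix.IsHermitian.isSquare_discrim {𝕜 ι : Type*} [RCLike 𝕜] [Fintype ι] [DecidableEq ι]
    [Nonempty ι] {A : Matrix ι ι 𝕜} (hA : A.IsHermitian) (htr : A.trace = 0) {c m : ℤ}
    (hm : m ≠ 0) (h : A ^ 2 = (c : 𝕜) • 1 + (m : 𝕜) • A) : IsSquare (m ^ 2 + 4 * c) := by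
  refine isSquare_discrim_of_sum_eq_zero hm
    (hA.eigenvalues_sq_eq (by simpa only [RCLike.ofReal_intCast] using h)) ?_
  have := hA.trace_eq_sum_eigenvalues
  rw [htr] at this
  exact_mod_cast this.symm

lemma nine_dvd_of_isSquare {x y : ℤ} (hx : 3 ∣ x) (hy : 3 ∣ y) (h : IsSquare (x ^ 2 + 4 * y)) :
    9 ∣ y := by
  obtain ⟨d, hd⟩ := h
  obtain ⟨a, rfl⟩ := hx
  obtain ⟨b, rfl⟩ := hy
  obtain ⟨e, rfl⟩ : 3 ∣ d := Int.prime_three.dvd_of_dvd_pow (n := 2)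
    ⟨3 * a ^ 2 + 4 * b, by linear_combination -hd⟩
  have : 12 * b = 9 * (e ^ 2 - a ^ 2) := by linear_combination hd
  omega

section CubeRootSeidel

variable {n : ℕ} {Q : Matrix (Fin n) (Fin n) ℂ}

lemma IsCubeRootSeidel.apply_mem (hQ : IsCubeRootSeidel Q) (i j : Fin n) :
    Q i j = 0 ∨ Q i j = 1 ∨ Q i j = ω3 ∨ Q i j = ω3 ^ 2 := by
  by_cases h : i = j
  · exact Or.inl (h ▸ hQ.2.1 i)
  · exact Or.inr (hQ.2.2 i j h)

lemma IsCubeRootSeidel.eq_mapMatrix_coords (hQ : IsCubeRootSeidel Q) :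
    Q = (Int.castRingHom ℂ).mapMatrix (Q.map coordOne) +
      (ω3 - 1) • (Int.castRingHom ℂ).mapMatrix (Q.map coordOmegaSubOne) := by
  ext i j
  simpa [mul_comm] using (coordOne_add_coordOmegaSubOne (hQ.apply_mem i j)).symm

lemma IsCubeRootSeidel.mapMatrix_coordOne (hQ : IsCubeRootSeidel Q) :
    (Int.castRingHom (ZMod 3)).mapMatrix (Q.map coordOne) = allOnes (Fin n) (ZMod 3) - 1 := by
  ext i j
  by_cases h : i = j
  · subst h; simp [hQ.2.1 i, coordOne]
  · simp [h, coordOne_cast (hQ.2.2 i j h)]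

lemma IsCubeRootSeidel.trace_eq_zero (hQ : IsCubeRootSeidel Q) : Q.trace = 0 := by
  simp [Matrix.trace, hQ.2.1]

lemma IsStandardForm.apply_zero_left [NeZero n] (hsf : IsStandardForm Q) {k : Fin n}
    (hk : k ≠ 0) : Q 0 k = 1 :=
  hsf 0 k hk.symm (Or.inl rfl)

lemma IsStandardForm.apply_zero_right [NeZero n] (hsf : IsStandardForm Q) {k : Fin n}
    (hk : k ≠ 0) : Q k 0 = 1 :=
  hsf k 0 hk (Or.inr rfl)

lemma IsCubeRootSeidel.coordOmegaSubOne_apply_zero_left [NeZero n] (hQ : IsCubeRootSeidel Q)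
    (hsf : IsStandardForm Q) (k : Fin n) : coordOmegaSubOne (Q 0 k) = 0 := by
  refine coordOmegaSubOne_eq_zero ?_
  rcases eq_or_ne k 0 with rfl | hk
  · exact Or.inl (hQ.2.1 0)
  · exact Or.inr (hsf.apply_zero_left hk)

lemma IsCubeRootSeidel.coordOmegaSubOne_apply_zero_right [NeZero n] (hQ : IsCubeRootSeidel Q)
    (hsf : IsStandardForm Q) (k : Fin n) : coordOmegaSubOne (Q k 0) = 0 := by
  refine coordOmegaSubOne_eq_zero ?_
  rcases eq_or_ne k 0 with rfl | hk
  · exact Or.inl (hQ.2.1 0)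
  · exact Or.inr (hsf.apply_zero_right hk)

lemma IsCubeRootSeidel.three_dvd_sub_two_sub (hQ : IsCubeRootSeidel Q)
    {T : Matrix (Fin n) (Fin n) ℤ} {c m : ℤ} (h : Q.map coordOne * Q.map coordOne - 3 • (T * T) = c • 1 + m • Q.map coordOne)
    {i j : Fin n} (hij : i ≠ j) : 3 ∣ (n : ℤ) - 2 - m := by
  have := congrArg (fun M => (Int.castRingHom (ZMod 3)).mapMatrix M i j) h
  simp only [map_sub, map_add, map_mul, map_nsmul, map_zsmul, map_one, hQ.mapMatrix_coordOne,
    ZModModule.char_nsmul_eq_zero, sub_zero, allOnes_sub_one_mul_self_apply_of_ne hij,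
    ← Int.cast_smul_eq_zsmul (ZMod 3)] at this
  simp only [Matrix.add_apply, Matrix.smul_apply, Matrix.sub_apply, one_apply_ne hij,
    allOnes_apply, smul_eq_mul, mul_zero, sub_zero, mul_one, zero_add, Fintype.card_fin] at this
  exact_mod_cast (ZMod.intCast_eq_intCast_iff_dvd_sub m ((n : ℤ) - 2) 3).1
    (by push_cast; exact this.symm)

lemma IsCubeRootSeidel.three_dvd_add_two [NeZero n] (hQ : IsCubeRootSeidel Q)
    (hsf : IsStandardForm Q) (hnt : IsNontrivial Q) {m : ℤ}
    (h : Q.map coordOne * Q.map coordOmegaSubOne + Q.map coordOmegaSubOne * Q.map coordOne -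
      3 • (Q.map coordOmegaSubOne * Q.map coordOmegaSubOne) = m • Q.map coordOmegaSubOne) :
    3 ∣ m + 2 := by
  have hT := congrArg (Int.castRingHom (ZMod 3)).mapMatrix h
  simp only [map_sub, map_add, map_mul, map_nsmul, map_zsmul, hQ.mapMatrix_coordOne,
    ZModModule.char_nsmul_eq_zero, sub_zero, ← Int.cast_smul_eq_zsmul (ZMod 3) m] at hT
  set T := (Int.castRingHom (ZMod 3)).mapMatrix (Q.map coordOmegaSubOne)
  have hrow (k : Fin n) : T 0 k = 0 := by simp [T, hQ.coordOmegaSubOne_apply_zero_left hsf]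
  have hcol (k : Fin n) : T k 0 = 0 := by simp [T, hQ.coordOmegaSubOne_apply_zero_right hsf]
  have hT0 := smul_eq_zero_of_allOnes_sub_one_mul_add 0 hrow hcol hT
  obtain ⟨i, j, hij, hQij⟩ := hnt
  have hTij : T i j ≠ 0 := by
    simpa [T] using coordOmegaSubOne_cast_ne_zero ((hQ.2.2 i j hij).resolve_left hQij)
  have := congrFun (congrFun hT0 i) j
  simp only [Matrix.smul_apply, smul_eq_mul, Matrix.zero_apply, mul_eq_zero, hTij, or_false] at this
  exact_mod_cast (ZMod.intCast_zmod_eq_zero_iff_dvd (m + 2) 3).1 (by push_cast; exact this)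

end CubeRootSeidel

theorem cubeRootSeidel_mod_nine_cases
    (n : ℕ) (Q : Matrix (Fin n) (Fin n) ℂ) (μ : ℝ)
    (hQ : IsCubeRootSeidel Q) (hsf : IsStandardForm Q) (hnt : IsNontrivial Q)
    (heq : Q ^ 2 = ((n : ℂ) - 1) • (1 : Matrix (Fin n) (Fin n) ℂ) + (μ : ℂ) • Q) :
    ∃ m : ℤ, μ = (m : ℝ) ∧
      ((n % 9 = 0 ∧ m % 9 = 7) ∨ (n % 9 = 3 ∧ m % 9 = 1) ∨
        (n % 9 = 6 ∧ m % 9 = 4)) := by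
  obtain ⟨i, j, hij, hQij⟩ := id hnt
  have : NeZero n := ⟨by rintro rfl; exact i.elim0⟩
  have hj : j ≠ 0 := fun h => hQij (hsf i j hij (Or.inr (by simp [h])))
  have hQS := hQ.eq_mapMatrix_coords
  obtain ⟨m, rfl⟩ := exists_eq_intCast_of_sq_eq hQS heq (Ne.symm hj) (hsf.apply_zero_left hj)
  have heq' : Q ^ 2 = (((n : ℤ) - 1 : ℤ) : ℂ) • 1 + (m : ℂ) • Q := by simpa using heq
  obtain ⟨hS, hT⟩ := coord_sq_eq_of_sq_eq hQS heq'
  have hn3 := hQ.three_dvd_sub_two_sub hS hij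
  have hm3 := hQ.three_dvd_add_two hsf hnt hT
  have hsq := hQ.1.isSquare_discrim hQ.trace_eq_zero (by omega) heq'
  have h9 := nine_dvd_of_isSquare hm3 hn3 (by convert hsq using 1; ring)
  exact ⟨m, rfl, by omega⟩
end

section
/- Let ω = (−1 + i√3)/2. For every positive integer m there exists a 9^m × 9^m cube root Seidel matrix Q in standard form which is nontrivial (at least one entry of Q equals ω) and satisfies Q² = (9^m − 1)·I − 2·Q. -/
/- ### Auxiliary material -/

lemma sqrt3_sq' : ((Real.sqrt 3 : ℝ) : ℂ) ^ 2 = 3 := by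
  rw [← Complex.ofReal_pow, Real.sq_sqrt (by norm_num : (3:ℝ) ≥ 0)]
  norm_num

lemma ω3_sq_add' : ω3 ^ 2 + ω3 + 1 = 0 := by
  unfold ω3
  linear_combination (((Real.sqrt 3 : ℝ) : ℂ) ^ 2 / 4) * Complex.I_sq - (1/4) * sqrt3_sq'

lemma ω3_cube' : ω3 ^ 3 = 1 := by linear_combination (ω3 - 1) * ω3_sq_add'

lemma conj_ω3' : (starRingEnd ℂ) ω3 = ω3 ^ 2 := by
  unfold ω3
  simp only [map_div₀, map_add, map_mul, Complex.conj_I, Complex.conj_ofReal, map_neg,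
    map_one, map_ofNat]
  linear_combination (-(((Real.sqrt 3 : ℝ) : ℂ) ^ 2) / 4) * Complex.I_sq + (1/4) * sqrt3_sq'

lemma ω3_pow_mod (n : ℕ) : ω3 ^ n = ω3 ^ (n % 3) := by
  conv_lhs => rw [← Nat.div_add_mod n 3]
  rw [pow_add, pow_mul, ω3_cube', one_pow, one_mul]

/-- exponentiation of `ω3` by an element of `ZMod 3`. -/
noncomputable def fz (a : ZMod 3) : ℂ := ω3 ^ a.val

lemma fz_zero : fz 0 = 1 := by simp [fz]

lemma fz_one : fz 1 = ω3 := by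
  have h : (1 : ZMod 3).val = 1 := by decide
  rw [fz, h, pow_one]

lemma fz_two : fz 2 = ω3 ^ 2 := by
  have h : (2 : ZMod 3).val = 2 := by decide
  rw [fz, h]

lemma fz_add (a b : ZMod 3) : fz (a + b) = fz a * fz b := by
  unfold fz
  rw [ZMod.val_add, ← ω3_pow_mod, pow_add]

lemma zmod3_cases : ∀ a : ZMod 3, a = 0 ∨ a = 1 ∨ a = 2 := by decide

lemma conj_fz (a : ZMod 3) : (starRingEnd ℂ) (fz a) = fz (-a) := by
  rcases zmod3_cases a with h | h | h <;> subst h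
  · simp [fz_zero]
  · rw [show (-1 : ZMod 3) = 2 by decide, fz_one, fz_two, conj_ω3']
  · rw [show (-2 : ZMod 3) = 1 by decide, fz_one, fz_two, map_pow, conj_ω3', ← pow_mul,
      ω3_pow_mod, pow_one]

lemma fz_mem (a : ZMod 3) : fz a = 1 ∨ fz a = ω3 ∨ fz a = ω3 ^ 2 := by
  rcases zmod3_cases a with h | h | h <;> subst h
  · exact Or.inl fz_zero
  · exact Or.inr (Or.inl fz_one)
  · exact Or.inr (Or.inr fz_two)

lemma fz_sum_three : fz 0 + fz 1 + fz 2 = 0 := by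
  rw [fz_zero, fz_one, fz_two]; linear_combination ω3_sq_add'

lemma fz_finsum {α : Type*} (s : Finset α) (c : α → ZMod 3) :
    fz (∑ k ∈ s, c k) = ∏ k ∈ s, fz (c k) := by
  induction s using Finset.cons_induction with
  | empty => simp [fz_zero]
  | cons a s ha ih => rw [Finset.sum_cons, Finset.prod_cons, fz_add, ih]

lemma zmod3_sum (F : ZMod 3 → ℂ) : ∑ v : ZMod 3, F v = F 0 + F 1 + F 2 := by
  rw [show (Finset.univ : Finset (ZMod 3)) = {0, 1, 2} by decide]
  rw [Finset.sum_insert (by decide), Finset.sum_insert (by decide),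
    Finset.sum_singleton]
  ring

/- ### The base 9 × 9 exponent matrix (symplectic form on (ℤ/3)²) -/

def Ebase (a b : Fin 9) : ZMod 3 :=
  ((a.val / 3 : ℕ) : ZMod 3) * ((b.val % 3 : ℕ) : ZMod 3)
    - ((a.val % 3 : ℕ) : ZMod 3) * ((b.val / 3 : ℕ) : ZMod 3)

lemma Ebase_diag : ∀ a : Fin 9, Ebase a a = 0 := by decide
lemma Ebase_skew : ∀ a b : Fin 9, Ebase b a = -Ebase a b := by decide
lemma Ebase_zero_left : ∀ b : Fin 9, Ebase 0 b = 0 := by decide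
lemma Ebase_zero_right : ∀ a : Fin 9, Ebase a 0 = 0 := by decide
lemma Ebase_cancel : ∀ a x : Fin 9, Ebase a x + Ebase x a = 0 := by decide
lemma Ebase_three_one : Ebase 3 1 = 1 := by decide

lemma Ebase_count : ∀ a b : Fin 9, a ≠ b → ∀ v : ZMod 3,
    (Finset.univ.filter (fun x => Ebase a x + Ebase x b = v)).card = 3 := by
  decide

lemma base_sum (a b : Fin 9) :
    (∑ x : Fin 9, fz (Ebase a x + Ebase x b)) = if a = b then (9 : ℂ) else 0 := by
  by_cases h : a = b
  · subst h
    rw [if_pos rfl,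
      Finset.sum_congr rfl (fun x _ => by rw [Ebase_cancel a x, fz_zero])]
    simp
  · rw [if_neg h,
      ← Finset.sum_fiberwise Finset.univ (fun x => Ebase a x + Ebase x b)
        (fun x => fz (Ebase a x + Ebase x b))]
    have h1 : ∀ v : ZMod 3,
        (∑ x ∈ Finset.univ.filter (fun x => Ebase a x + Ebase x b = v),
          fz (Ebase a x + Ebase x b)) = 3 * fz v := by
      intro v
      rw [Finset.sum_congr rfl (fun x hx => by rw [(Finset.mem_filter.mp hx).2]),
        Finset.sum_const, Ebase_count a b h v]
      simp
    rw [Finset.sum_congr rfl (fun v _ => h1 v), zmod3_sum]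
    linear_combination 3 * fz_sum_three

/- ### The 9^m × 9^m matrices -/

/-- base-9 digits of an index. -/
def dig {m : ℕ} (i : Fin (9 ^ m)) : Fin m → Fin 9 := finFunctionFinEquiv.symm i

/-- exponent matrix of the tensor power. -/
def Em {m : ℕ} (i j : Fin (9 ^ m)) : ZMod 3 := ∑ k, Ebase (dig i k) (dig j k)

noncomputable def Hmat (m : ℕ) : Matrix (Fin (9 ^ m)) (Fin (9 ^ m)) ℂ :=
  fun i j => fz (Em i j)

lemma dig_apply_equiv {m : ℕ} (g : Fin m → Fin 9) : dig (finFunctionFinEquiv g) = g := by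
  rw [dig, Equiv.symm_apply_apply]

lemma Em_self {m : ℕ} (i : Fin (9 ^ m)) : Em i i = 0 := by
  rw [Em, Finset.sum_congr rfl (fun k _ => Ebase_diag (dig i k))]
  simp

lemma Em_skew {m : ℕ} (i j : Fin (9 ^ m)) : Em j i = -Em i j := by
  rw [Em, Em, Finset.sum_congr rfl (fun k _ => Ebase_skew (dig i k) (dig j k)),
    Finset.sum_neg_distrib]

lemma dig_of_val_zero {m : ℕ} (i : Fin (9 ^ m)) (h : i.val = 0) (k : Fin m) :
    dig i k = 0 := by
  have he : finFunctionFinEquiv (fun _ : Fin m => (0 : Fin 9)) = i := by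
    apply Fin.ext
    rw [finFunctionFinEquiv_apply, h]
    simp
  rw [dig, ← he, Equiv.symm_apply_apply]

lemma Em_left_zero {m : ℕ} (i j : Fin (9 ^ m)) (h : i.val = 0) : Em i j = 0 := by
  rw [Em, Finset.sum_congr rfl
    (fun k _ => by rw [dig_of_val_zero i h k, Ebase_zero_left])]
  simp

lemma Em_right_zero {m : ℕ} (i j : Fin (9 ^ m)) (h : j.val = 0) : Em i j = 0 := by
  rw [Em, Finset.sum_congr rfl
    (fun k _ => by rw [dig_of_val_zero j h k, Ebase_zero_right])]
  simp

lemma Hmat_isHermitian (m : ℕ) : (Hmat m).IsHermitian := by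
  ext i j
  rw [Matrix.conjTranspose_apply, Hmat, Hmat]
  show (starRingEnd ℂ) (fz (Em j i)) = fz (Em i j)
  rw [conj_fz, Em_skew, neg_neg]

lemma Hmat_sq (m : ℕ) : Hmat m ^ 2 = ((9 : ℂ) ^ m) • 1 := by
  rw [sq]
  ext i j
  rw [Matrix.mul_apply]
  have e1 : (∑ u : Fin (9 ^ m), Hmat m i u * Hmat m u j)
      = ∑ g : Fin m → Fin 9,
          ∏ k, fz (Ebase (dig i k) (g k) + Ebase (g k) (dig j k)) := by
    rw [← Equiv.sum_comp finFunctionFinEquiv (fun u => Hmat m i u * Hmat m u j)]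
    refine Finset.sum_congr rfl (fun g _ => ?_)
    rw [Hmat, Hmat]
    show fz (Em i (finFunctionFinEquiv g)) * fz (Em (finFunctionFinEquiv g) j) = _
    rw [← fz_add, Em, Em, dig_apply_equiv, ← Finset.sum_add_distrib, fz_finsum]
  have e2 := Finset.prod_univ_sum (fun _ : Fin m => (Finset.univ : Finset (Fin 9)))
    (fun k x => fz (Ebase (dig i k) x + Ebase x (dig j k)))
  rw [Fintype.piFinset_univ] at e2
  rw [e1, ← e2, Finset.prod_congr rfl (fun k _ => base_sum (dig i k) (dig j k))]
  by_cases hij : i = j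
  · subst hij
    simp [Matrix.one_apply]
  · have hd : dig i ≠ dig j := fun h => hij (finFunctionFinEquiv.symm.injective h)
    obtain ⟨k, hk⟩ := Function.ne_iff.mp hd
    rw [Finset.prod_eq_zero (Finset.mem_univ k)
      (show (if dig i k = dig j k then (9:ℂ) else 0) = 0 from if_neg hk)]
    simp [Matrix.one_apply, Ne.symm, hij]

theorem exists_cubeRootSeidel_nine_pow
    (m : ℕ) (hm : 0 < m) :
    ∃ Q : Matrix (Fin (9 ^ m)) (Fin (9 ^ m)) ℂ,
      IsCubeRootSeidel Q ∧ IsStandardForm Q ∧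
      (∃ i j : Fin (9 ^ m), Q i j = ω3) ∧
      Q ^ 2 = ((9 ^ m : ℂ) - 1) • (1 : Matrix (Fin (9 ^ m)) (Fin (9 ^ m)) ℂ)
        - (2 : ℂ) • Q := by
  refine ⟨Hmat m - 1, ⟨?_, ?_, ?_⟩, ?_, ?_, ?_⟩
  · exact (Hmat_isHermitian m).sub Matrix.isHermitian_one
  · intro i
    rw [Matrix.sub_apply, Matrix.one_apply_eq, Hmat]
    show fz (Em i i) - 1 = 0
    rw [Em_self, fz_zero, sub_self]
  · intro i j hij
    rw [Matrix.sub_apply, Matrix.one_apply_ne hij, Hmat, sub_zero]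
    exact fz_mem (Em i j)
  · intro i j hij h0
    rw [Matrix.sub_apply, Matrix.one_apply_ne hij, Hmat, sub_zero]
    show fz (Em i j) = 1
    rcases h0 with h | h
    · rw [Em_left_zero i j h, fz_zero]
    · rw [Em_right_zero i j h, fz_zero]
  · -- nontriviality
    set k0 : Fin m := ⟨0, hm⟩
    set i : Fin (9 ^ m) := finFunctionFinEquiv (Pi.single k0 (3 : Fin 9))
    set j : Fin (9 ^ m) := finFunctionFinEquiv (Pi.single k0 (1 : Fin 9))
    have hij : i ≠ j := by
      intro h
      have := congrFun (finFunctionFinEquiv.injective h) k0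
      rw [Pi.single_eq_same, Pi.single_eq_same] at this
      exact absurd this (by decide)
    refine ⟨i, j, ?_⟩
    rw [Matrix.sub_apply, Matrix.one_apply_ne hij, Hmat, sub_zero]
    show fz (Em i j) = ω3
    have hE : Em i j = 1 := by
      rw [Em, dig_apply_equiv, dig_apply_equiv]
      rw [Fintype.sum_eq_single k0 (fun k hk => by
        rw [Pi.single_eq_of_ne hk, Pi.single_eq_of_ne hk, Ebase_diag])]
      rw [Pi.single_eq_same, Pi.single_eq_same, Ebase_three_one]
    rw [hE, fz_one]
  · have expand : (Hmat m - 1) ^ 2 = Hmat m ^ 2 - Hmat m - Hmat m + 1 := by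
      noncomm_ring
    rw [expand, Hmat_sq]
    have : Hmat m = (Hmat m - 1) + 1 := by noncomm_ring
    rw [this]
    module
end
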